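/- arXiv:2006.12970 — 3 statements merged into one kernel-verified Lean document; each statement's English description precedes it below -/
import Mathlib

section
/- For integers n ≥ 0, m ≥ 2, r ≥ 1, the 3-variable truncated exponential-Gould-Hopper polynomial _eH_n^{(m,r)}(x,y,z), defined by the generating function e^{xt+yt^m}/(1-z t^r) = Σ_{n≥0} _eH_n^{(m,r)}(x,y,z) t^n/n!, satisfies the double-sum expansion _eH_n^{(m,r)}(x,y,z) = n! Σ_{k=0}^{⌊n/r⌋} Σ_{l=0}^{⌊(n-rk)/m⌋} z^k x^{n-rk-ml} y^l / (l! (n-rk-ml)!). -/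
open scoped BigOperators

/-- The exponential series `e^{xt}` in `ℝ[[t]]`. -/
noncomputable def expPS (x : ℝ) : PowerSeries ℝ :=
  PowerSeries.mk fun n => x ^ n / n.factorial

/-- The series `e^{y t^m} = ∑_k y^k t^{mk}/k!` in `ℝ[[t]]`. -/
noncomputable def expMonPS (y : ℝ) (m : ℕ) : PowerSeries ℝ :=
  PowerSeries.mk fun n => if m ∣ n then y ^ (n / m) / (n / m).factorial else 0

/-!
Since `1 - z t^r` has constant coefficient `1`, it is a unit of `ℝ⟦t⟧`, so the relation with the
denominator cleared determines the EGF. Dividing a series `f` by `1 - z t^r` gives the series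
with `n`-th coefficient `∑_k z^k [t^(n - r k)] f`, and the coefficient of `t^j` in
`e^{xt} e^{yt^m}` is `∑_l x^(j - m l) y^l / (l! (j - m l)!)`.
-/

open PowerSeries Finset

theorem Finset.sum_range_succ_filter_dvd {M : Type*} [AddCommMonoid M] (g : ℕ → M) (m n : ℕ) :
    ∑ j ∈ range (n + 1) with m ∣ j, g j = ∑ l ∈ range (n / m + 1), g (m * l) := by
  rcases m.eq_zero_or_pos with rfl | hm
  · simp [Finset.filter_eq']
  refine sum_nbij' (· / m) (m * ·) ?_ ?_ ?_ ?_ ?_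
  · intro j hj
    simp only [mem_filter, mem_range, Nat.lt_succ_iff] at hj ⊢
    exact Nat.div_le_div_right hj.1
  · intro l hl
    simp only [mem_filter, mem_range, Nat.lt_succ_iff] at hl ⊢
    exact ⟨(Nat.mul_le_mul_left m hl).trans (Nat.mul_div_le n m), dvd_mul_right m l⟩
  · intro j hj
    exact Nat.mul_div_cancel' (mem_filter.mp hj).2
  · intro l _
    exact Nat.mul_div_cancel_left l hm
  · intro j hj
    simp only [Nat.mul_div_cancel' (mem_filter.mp hj).2]

namespace PowerSeries

variable {R : Type*} [CommRing R]

theorem coeff_mul_one_sub_C_mul_X_pow (f : R⟦X⟧) (z : R) (r n : ℕ) :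
    coeff n (f * (1 - C z * X ^ r)) = coeff n f - z * if r ≤ n then coeff (n - r) f else 0 := by
  rw [mul_sub, mul_one, map_sub, mul_left_comm, coeff_C_mul, coeff_mul_X_pow']

theorem isUnit_one_sub_C_mul_X_pow (z : R) {r : ℕ} (hr : r ≠ 0) :
    IsUnit (1 - C z * X ^ r : R⟦X⟧) := by
  simp [isUnit_iff_constantCoeff, hr]

theorem mk_sum_geom_mul_one_sub_C_mul_X_pow (f : R⟦X⟧) (z : R) {r : ℕ} (hr : r ≠ 0) :
    mk (fun n => ∑ k ∈ range (n / r + 1), z ^ k * coeff (n - r * k) f) * (1 - C z * X ^ r) =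
      f := by
  ext n
  rw [coeff_mul_one_sub_C_mul_X_pow, coeff_mk]
  split_ifs with hn
  -- Peeling off the `k = 0` term leaves `z` times the same sum at `n - r`.
  · rw [coeff_mk, Nat.div_eq_sub_div (Nat.pos_of_ne_zero hr) hn, sum_range_succ', mul_sum]
    have hshift : ∀ k, n - r * (k + 1) = n - r - r * k := fun k => by
      rw [mul_add_one, Nat.sub_add_eq, Nat.sub_right_comm]
    simp only [hshift, pow_succ', mul_assoc, pow_zero, one_mul, mul_zero, Nat.sub_zero]
    rw [add_sub_cancel_left]
  · rw [Nat.div_eq_of_lt (by omega)]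
    simp

end PowerSeries

theorem coeff_mul_expMonPS (f : ℝ⟦X⟧) (y : ℝ) (m n : ℕ) :
    coeff n (f * expMonPS y m) =
      ∑ l ∈ range (n / m + 1), y ^ l / l.factorial * coeff (n - m * l) f := by
  rw [mul_comm, coeff_mul,
    Nat.sum_antidiagonal_eq_sum_range_succ (fun i j => coeff i (expMonPS y m) * coeff j f)]
  simp only [expMonPS, coeff_mk, ite_mul, zero_mul]
  rw [← sum_filter, sum_range_succ_filter_dvd]
  refine sum_congr rfl fun l hl => ?_
  obtain rfl | hm := m.eq_zero_or_pos
  · simp_all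
  rw [Nat.mul_div_cancel_left l hm]

theorem tegh_explicit_general (m r : ℕ) (hr : 1 ≤ r) (x y z : ℝ) (EH : ℕ → ℝ)
    (hEH : PowerSeries.mk (fun n => EH n / n.factorial) *
        (1 - PowerSeries.C z * PowerSeries.X ^ r) = expPS x * expMonPS y m)
    (n : ℕ) :
    EH n = n.factorial *
      ∑ k ∈ Finset.range (n / r + 1), ∑ l ∈ Finset.range ((n - r * k) / m + 1),
        z ^ k * x ^ (n - r * k - m * l) * y ^ l /
          (l.factorial * (n - r * k - m * l).factorial) := by
  have hseries : mk (fun n => EH n / n.factorial) = mk fun n =>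
      ∑ k ∈ range (n / r + 1), z ^ k * coeff (n - r * k) (expPS x * expMonPS y m) := by
    have hr₀ : r ≠ 0 := by omega
    rw [← (isUnit_one_sub_C_mul_X_pow z hr₀).mul_left_inj, hEH,
      mk_sum_geom_mul_one_sub_C_mul_X_pow _ z hr₀]
  have hcoeff := congrArg (coeff n) hseries
  rw [coeff_mk, coeff_mk, div_eq_iff (by positivity)] at hcoeff
  rw [hcoeff, mul_comm]
  congr 1
  refine sum_congr rfl fun k _ => ?_
  rw [coeff_mul_expMonPS, mul_sum]
  refine sum_congr rfl fun l _ => ?_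
  rw [expPS, coeff_mk]
  field_simp

/-- Double-sum expansion of the 3-variable truncated exponential-Gould-Hopper
polynomials `_eH_n^{(m,r)}(x,y,z)` with EGF `e^{xt+yt^m}/(1-z t^r)` (denominator cleared). -/
theorem tegh_explicit (m r : ℕ) (hm : 2 ≤ m) (hr : 1 ≤ r) (x y z : ℝ) (EH : ℕ → ℝ)
    (hEH : PowerSeries.mk (fun n => EH n / n.factorial) *
        (1 - PowerSeries.C z * PowerSeries.X ^ r) = expPS x * expMonPS y m)
    (n : ℕ) :
    EH n = n.factorial *
      ∑ k ∈ Finset.range (n / r + 1), ∑ l ∈ Finset.range ((n - r * k) / m + 1),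
        z ^ k * x ^ (n - r * k - m * l) * y ^ l /
          (l.factorial * (n - r * k - m * l).factorial) :=
  tegh_explicit_general m r hr x y z EH hEH n
end

section
/- Let λ ∈ ℂ and ν ∈ ℕ, and define the array-type polynomials S(x;n,ν;λ) by the EGF ((λe^t - 1)^ν/ν!) e^{xt} = Σ_{n≥0} S(x;n,ν;λ) t^n/n!. Then the explicit formula for the negative-order unified Apostol-type truncated exponential-Gould-Hopper polynomials holds: _{eH}P_{n-kα,β}^{(-α,m,r)}(x,y,z;k,a,b) = ((n-kα)! α! a^{bα} / 2^{(1-k)α}) Σ_{p=0}^{⌊n/m⌋} Σ_{s=0}^{⌊n/r⌋ } S(x; n-rs-mp, α; (β/a)^b) y^p z^s / ((n-rs-mp)! p!), where the sum extends over indices with n - rs - mp ≥ 0. -/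
open scoped BigOperators

/-- The exponential series `e^{ct}` in `ℂ[[t]]`. -/
noncomputable def expC (c : ℂ) : PowerSeries ℂ :=
  PowerSeries.mk fun n => c ^ n / n.factorial

/-- The series `e^{y t^m} = ∑_k y^k t^{mk}/k!` in `ℂ[[t]]`. -/
noncomputable def expMonC (y : ℂ) (m : ℕ) : PowerSeries ℂ :=
  PowerSeries.mk fun n => if m ∣ n then y ^ (n / m) / (n / m).factorial else 0

/-!
Multiplying the generating relation by `∑ zˢ t^{rs} = (1 - z t^r)⁻¹` leaves
`2^{(1-k)α} t^{kα} ∑ Q_n tⁿ/n!` on the right. On the left, `β^b = a^b (β/a)^b` pulls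
`a^{bα}` out of the `α`-th power, and the binomial theorem identifies `((β/a)^b eᵗ - 1)^α e^{xt}`
with `α!` times the exponential generating function of `S(x; ·, α; (β/a)^b)`. Comparing the
coefficients of `tⁿ` in the resulting threefold Cauchy product gives the formula.
-/

open PowerSeries Finset

theorem Finset.sum_range_succ_ite_dvd {M : Type*} [AddCommMonoid M] {r : ℕ} (hr : r ≠ 0)
    (n : ℕ) (g : ℕ → M) :
    ∑ i ∈ range (n + 1), (if r ∣ i then g i else 0) = ∑ s ∈ range (n / r + 1), g (r * s) := by
  rw [← sum_filter]
  refine sum_nbij' (· / r) (r * ·) (fun i hi => ?_) (fun s hs => ?_) (fun i hi => ?_)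
    (fun s _ => Nat.mul_div_cancel_left s (Nat.pos_of_ne_zero hr)) (fun i hi => ?_)
  · simp only [mem_filter, mem_range] at hi ⊢
    exact Nat.lt_succ_of_le (Nat.div_le_div_right (Nat.le_of_lt_succ hi.1))
  · simp only [mem_filter, mem_range] at hs ⊢
    exact ⟨Nat.lt_succ_of_le (mul_comm r s ▸ Nat.mul_le_of_le_div r s n (Nat.le_of_lt_succ hs)),
      dvd_mul_right r s⟩
  · simp only [mem_filter] at hi
    exact Nat.mul_div_cancel' hi.2
  · simp only [mem_filter] at hi
    rw [Nat.mul_div_cancel' hi.2]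

namespace PowerSeries

variable {R : Type*} [CommRing R]

theorem one_sub_C_mul_X_pow_mul_expand_rescale_mk_one (z : R) {r : ℕ} (hr : r ≠ 0) :
    (1 - C z * X ^ r) * expand r hr (rescale z (mk 1)) = 1 := by
  have h : 1 - C z * X ^ r = expand r hr (rescale z (1 - X)) := by
    simp [rescale_X, expand_C]
  rw [h, ← map_mul, ← map_mul, mul_comm, mk_one_mul_one_sub_eq_one, map_one, map_one]

theorem coeff_expand_mul_eq_sum {r : ℕ} (hr : r ≠ 0) (φ F : R⟦X⟧) {n N : ℕ} (hN : n / r ≤ N) :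
    coeff n (expand r hr φ * F) =
      ∑ s ∈ range (N + 1), if r * s ≤ n then coeff s φ * coeff (n - r * s) F else 0 := by
  have hrange : (range (N + 1)).filter (fun s => r * s ≤ n) = range (n / r + 1) := by
    ext s
    rw [mem_filter, mem_range, mem_range, Nat.lt_succ_iff, Nat.lt_succ_iff, mul_comm,
      ← Nat.le_div_iff_mul_le (Nat.pos_of_ne_zero hr)]
    omega
  rw [← sum_filter, hrange, coeff_mul, Nat.sum_antidiagonal_eq_sum_range_succ_mk]
  simp only [coeff_expand, ite_mul, zero_mul]
  rw [sum_range_succ_ite_dvd hr]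
  refine sum_congr rfl fun s _ => ?_
  rw [Nat.mul_div_cancel_left s (Nat.pos_of_ne_zero hr)]

theorem coeff_expand_mul_expand_mul {r m : ℕ} (hr : r ≠ 0) (hm : m ≠ 0) (φ ψ F : R⟦X⟧) (n : ℕ) :
    coeff n (expand r hr φ * (expand m hm ψ * F)) =
      ∑ p ∈ range (n / m + 1), ∑ s ∈ range (n / r + 1),
        if r * s + m * p ≤ n then coeff s φ * coeff p ψ * coeff (n - r * s - m * p) F else 0 := by
  rw [coeff_expand_mul_eq_sum hr _ _ le_rfl, sum_comm]
  refine sum_congr rfl fun s _ => ?_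
  split_ifs with hs
  · rw [coeff_expand_mul_eq_sum hm _ _ (Nat.div_le_div_right (Nat.sub_le n (r * s))), mul_sum]
    refine sum_congr rfl fun p _ => ?_
    by_cases hp : r * s + m * p ≤ n
    · rw [if_pos (by omega), if_pos hp, mul_assoc]
    · rw [if_neg (by omega), if_neg hp, mul_zero]
  · exact (sum_eq_zero fun p _ => if_neg (by omega)).symm

end PowerSeries

theorem Complex.div_ofReal_cpow_mul_ofReal_cpow {a : ℝ} (ha : 0 < a) (β s : ℂ) :
    (β / a) ^ s * (a : ℂ) ^ s = β ^ s := by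
  rcases eq_or_ne β 0 with rfl | hβ
  · rcases eq_or_ne s 0 with rfl | hs
    · simp
    · simp [Complex.zero_cpow hs]
  · have ha' : (a : ℂ) ≠ 0 := Complex.ofReal_ne_zero.mpr ha.ne'
    have hlog : Complex.log (β / a) = Complex.log β - Complex.log a := by
      rw [div_eq_mul_inv, ← Complex.ofReal_inv, Complex.log_mul_ofReal _ (inv_pos.mpr ha) _ hβ,
        Real.log_inv, Complex.ofReal_neg, Complex.ofReal_log ha.le]
      ring
    rw [Complex.cpow_def_of_ne_zero (div_ne_zero hβ ha'), Complex.cpow_def_of_ne_zero ha',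
      Complex.cpow_def_of_ne_zero hβ, ← Complex.exp_add, hlog]
    ring_nf

theorem expC_eq_rescale_exp (c : ℂ) : expC c = rescale c (exp ℂ) := by
  ext n
  simp [expC, coeff_rescale, coeff_exp, div_eq_mul_inv]

theorem expC_mul_expC (c d : ℂ) : expC c * expC d = expC (c + d) := by
  simp only [expC_eq_rescale_exp, exp_mul_exp_eq_exp_add]

theorem expC_one_pow (j : ℕ) : expC 1 ^ j = expC j := by
  rw [expC_eq_rescale_exp, expC_eq_rescale_exp, rescale_one, RingHom.id_apply,
    exp_pow_eq_rescale_exp]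

theorem expMonC_eq_expand (y : ℂ) {m : ℕ} (hm : m ≠ 0) : expMonC y m = expand m hm (expC y) := by
  ext n
  simp [expMonC, expC, coeff_expand]

theorem coeff_expand_rescale_mk_one_mul_expMonC_mul_mk (z y : ℂ) {r m : ℕ} (hr : r ≠ 0)
    (hm : m ≠ 0) (f : ℕ → ℂ) (n : ℕ) :
    coeff n (expand r hr (rescale z (mk 1)) * (expMonC y m * mk fun i => f i / i.factorial)) =
      ∑ p ∈ range (n / m + 1), ∑ s ∈ range (n / r + 1),
        if r * s + m * p ≤ n then
          f (n - r * s - m * p) * y ^ p * z ^ s / ((n - r * s - m * p).factorial * p.factorial)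
        else 0 := by
  rw [expMonC_eq_expand y hm, coeff_expand_mul_expand_mul]
  refine sum_congr rfl fun p _ => sum_congr rfl fun s _ => ?_
  simp only [coeff_rescale, coeff_mk, Pi.one_apply, mul_one, expC]
  split_ifs <;> ring

/-- `arrayPoly l X n ν` is the array-type polynomial `S(X; n, ν; l)`. -/
noncomputable def arrayPoly (l X : ℂ) (n ν : ℕ) : ℂ :=
  (ν.factorial : ℂ)⁻¹ * ∑ j ∈ range (ν + 1), (ν.choose j : ℂ) * (-1) ^ (ν - j) * l ^ j * (X + j) ^ n

theorem C_mul_expC_one_sub_one_pow_mul_expC (l X : ℂ) (ν : ℕ) :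
    (C l * expC 1 - 1) ^ ν * expC X =
      C (ν.factorial : ℂ) * mk fun n => arrayPoly l X n ν / n.factorial := by
  have hterm : ∀ j ∈ range (ν + 1),
      (C l * expC 1) ^ j * (-1) ^ (ν - j) * (ν.choose j : ℂ⟦X⟧) * expC X =
        C ((ν.choose j : ℂ) * (-1) ^ (ν - j) * l ^ j) * expC (X + j) := by
    intro j _
    rw [mul_pow, expC_one_pow, add_comm X, ← expC_mul_expC, map_mul, map_mul, map_pow, map_pow,
      map_neg, map_one, map_natCast]
    ring
  ext n
  rw [sub_eq_add_neg, add_pow, sum_mul, sum_congr rfl hterm, map_sum, coeff_C_mul, coeff_mk,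
    arrayPoly]
  simp only [coeff_C_mul, expC, coeff_mk]
  rw [mul_div_assoc, ← mul_assoc, mul_inv_cancel₀ (Nat.cast_ne_zero.mpr ν.factorial_ne_zero),
    one_mul, sum_div]
  exact sum_congr rfl fun j _ => by ring

theorem negative_order_apostol_tegh_array_type_general
    (a b : ℝ) (ha : 0 < a) (β : ℂ) (x y z : ℝ)
    (k α m r : ℕ) (hm : 1 ≤ m) (hr : 1 ≤ r)
    (S : ℂ → ℕ → ℕ → ℂ) (Q : ℕ → ℂ)
    (hS : ∀ (X : ℂ) (n ν : ℕ), S X n ν = ((ν.factorial : ℂ))⁻¹ *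
      ∑ j ∈ Finset.range (ν + 1), (ν.choose j : ℂ) * (-1) ^ (ν - j) *
        ((β / (a : ℂ)) ^ (b : ℂ)) ^ j * (X + j) ^ n)
    (hQ : (PowerSeries.C (R := ℂ) (β ^ (b : ℂ)) * expC 1 -
          PowerSeries.C (R := ℂ) ((a ^ b : ℝ) : ℂ)) ^ α * (expC (x : ℂ) * expMonC (y : ℂ) m) =
        PowerSeries.C (R := ℂ) ((((2 : ℝ) ^ ((1 : ℝ) - (k : ℝ)) : ℝ) : ℂ)) ^ α *
          PowerSeries.X ^ (k * α) *
          ((1 - PowerSeries.C (R := ℂ) (z : ℂ) * PowerSeries.X ^ r) *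
            PowerSeries.mk (fun n => Q n / n.factorial)))
    (n : ℕ) (hn : k * α ≤ n) :
    Q (n - k * α) =
      ((n - k * α).factorial : ℂ) * (α.factorial : ℂ) * (((a ^ b : ℝ) : ℂ)) ^ α /
          ((((2 : ℝ) ^ ((1 : ℝ) - (k : ℝ)) : ℝ) : ℂ)) ^ α *
        ∑ p ∈ Finset.range (n / m + 1), ∑ s ∈ Finset.range (n / r + 1),
          if r * s + m * p ≤ n then
            S (x : ℂ) (n - r * s - m * p) α * (y : ℂ) ^ p * (z : ℂ) ^ s /
              ((n - r * s - m * p).factorial * p.factorial)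
          else 0 := by
  have hβ : β ^ (b : ℂ) = ((a ^ b : ℝ) : ℂ) * (β / (a : ℂ)) ^ (b : ℂ) := by
    rw [Complex.ofReal_cpow ha.le, mul_comm, Complex.div_ofReal_cpow_mul_ofReal_cpow ha]
  set l : ℂ := (β / (a : ℂ)) ^ (b : ℂ)
  set A : ℂ := ((a ^ b : ℝ) : ℂ)
  set c : ℂ := (((2 : ℝ) ^ ((1 : ℝ) - (k : ℝ)) : ℝ) : ℂ)
  set G : ℂ⟦X⟧ := expand r (by omega) (rescale (z : ℂ) (mk 1))
  set P : ℂ⟦X⟧ := mk fun n => arrayPoly l x n α / n.factorial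
  have hc : c ≠ 0 := Complex.ofReal_ne_zero.mpr (Real.rpow_pos_of_pos two_pos _).ne'
  have hbase : C (β ^ (b : ℂ)) * expC 1 - C A = C A * (C l * expC 1 - 1) := by
    rw [hβ, map_mul]
    ring
  rw [hbase, mul_pow] at hQ
  -- `hQ` with the EGF of `S` substituted and multiplied through by `G = (1 - z t^r)⁻¹`
  have hgf : C (A ^ α * α.factorial) * (G * (expMonC y m * P)) =
      C (c ^ α) * (mk (fun n => Q n / n.factorial) * X ^ (k * α)) := by
    simp only [map_mul, map_pow]
    linear_combination (-G * expMonC y m * C A ^ α) *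
        C_mul_expC_one_sub_one_pow_mul_expC l x α + G * hQ +
      (C c ^ α * X ^ (k * α) * mk (fun n => Q n / n.factorial)) *
        one_sub_C_mul_X_pow_mul_expand_rescale_mk_one (z : ℂ) (r := r) (by omega)
  have hcoeff := congrArg (coeff n) hgf
  rw [coeff_C_mul, coeff_expand_rescale_mk_one_mul_expMonC_mul_mk _ _ _ (by omega), coeff_C_mul,
    coeff_mul_X_pow', if_pos hn, coeff_mk, mul_div_assoc',
    eq_div_iff (Nat.cast_ne_zero.mpr (Nat.factorial_ne_zero _))] at hcoeff
  simp only [show ∀ N, S x N α = arrayPoly l x N α from fun N => hS x N α]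
  rw [div_mul_eq_mul_div, eq_div_iff (pow_ne_zero α hc)]
  linear_combination -hcoeff

/-- Explicit formula for the negative-order unified Apostol type-truncated
exponential-Gould-Hopper polynomials `Q n = _{eH}P_{n,β}^{(-α,m,r)}(x,y,z;k,a,b)` in
terms of the array-type polynomials `S(x;n,ν;(β/a)^b)`.  The defining generating
function `((β^b e^t - a^b)/(2^{1-k}t^k))^α e^{xt+yt^m}/(1-zt^r) = ∑ Q_n t^n/n!`
is stated with denominators cleared, and the inner sum carries the guard
`n - rs - mp ≥ 0`. -/
theorem negative_order_apostol_tegh_array_type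
    (a b : ℝ) (ha : 0 < a) (hb : 0 < b) (β : ℂ) (x y z : ℝ)
    (k α m r : ℕ) (hk : 1 ≤ k) (hα : 1 ≤ α) (hm : 1 ≤ m) (hr : 1 ≤ r)
    (S : ℂ → ℕ → ℕ → ℂ) (Q : ℕ → ℂ)
    (hS : ∀ (X : ℂ) (n ν : ℕ), S X n ν = ((ν.factorial : ℂ))⁻¹ *
      ∑ j ∈ Finset.range (ν + 1), (ν.choose j : ℂ) * (-1) ^ (ν - j) *
        ((β / (a : ℂ)) ^ (b : ℂ)) ^ j * (X + j) ^ n)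
    (hQ : (PowerSeries.C (R := ℂ) (β ^ (b : ℂ)) * expC 1 -
          PowerSeries.C (R := ℂ) ((a ^ b : ℝ) : ℂ)) ^ α * (expC (x : ℂ) * expMonC (y : ℂ) m) =
        PowerSeries.C (R := ℂ) ((((2 : ℝ) ^ ((1 : ℝ) - (k : ℝ)) : ℝ) : ℂ)) ^ α *
          PowerSeries.X ^ (k * α) *
          ((1 - PowerSeries.C (R := ℂ) (z : ℂ) * PowerSeries.X ^ r) *
            PowerSeries.mk (fun n => Q n / n.factorial)))
    (n : ℕ) (hn : k * α ≤ n) :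
    Q (n - k * α) =
      ((n - k * α).factorial : ℂ) * (α.factorial : ℂ) * (((a ^ b : ℝ) : ℂ)) ^ α /
          ((((2 : ℝ) ^ ((1 : ℝ) - (k : ℝ)) : ℝ) : ℂ)) ^ α *
        ∑ p ∈ Finset.range (n / m + 1), ∑ s ∈ Finset.range (n / r + 1),
          if r * s + m * p ≤ n then
            S (x : ℂ) (n - r * s - m * p) α * (y : ℂ) ^ p * (z : ℂ) ^ s /
              ((n - r * s - m * p).factorial * p.factorial)
          else 0 :=
  negative_order_apostol_tegh_array_type_general a b ha β x y z k α m r hm hr S Q hS hQ n hn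
end

section
/- Let α, γ, k, m, r be nonnegative integers with γ ≤ α and n ≥ kγ. Then the implicit formula _{eH}P_{n-kγ,β}^{(α-γ,m,r)}(x,y,z;k,a,b) = ((n-kγ)! γ!/n!) (a^b/2^{1-k})^γ Σ_{l=0}^{n} binom(n,l) _{eH}P_{n-l,β}^{(α,m,r)}(x,y,z;k,a,b) S(l, γ; (β/a)^b) holds, where S(l,γ;λ) are the λ-Stirling numbers of the second kind. -/
open scoped BigOperators

open PowerSeries

lemma Complex.ofReal_mul_cpow {r : ℝ} (hr : 0 < r) (z w : ℂ) :
    ((r : ℂ) * z) ^ w = (r : ℂ) ^ w * z ^ w := by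
  rcases eq_or_ne z 0 with rfl | hz
  · rcases eq_or_ne w 0 with rfl | hw
    · simp
    · simp [Complex.zero_cpow hw]
  have hr' : (r : ℂ) ≠ 0 := Complex.ofReal_ne_zero.mpr hr.ne'
  rw [Complex.cpow_def_of_ne_zero (mul_ne_zero hr' hz), Complex.log_ofReal_mul hr hz,
    Complex.ofReal_log hr.le, add_mul, Complex.exp_add, ← Complex.cpow_def_of_ne_zero hr',
    ← Complex.cpow_def_of_ne_zero hz]

lemma Complex.ofReal_rpow_mul_div_cpow {a : ℝ} (ha : 0 < a) (b : ℝ) (β : ℂ) :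
    ((a ^ b : ℝ) : ℂ) * (β / (a : ℂ)) ^ (b : ℂ) = β ^ (b : ℂ) := by
  have ha' : (a : ℂ) ≠ 0 := Complex.ofReal_ne_zero.mpr ha.ne'
  rw [Complex.ofReal_cpow ha.le, ← Complex.ofReal_mul_cpow ha, mul_div_cancel₀ _ ha']

@[simp]
lemma constantCoeff_expC (c : ℂ) : constantCoeff (expC c) = 1 := by
  simp [expC, ← coeff_zero_eq_constantCoeff_apply]

@[simp]
lemma constantCoeff_expMonC (y : ℂ) (m : ℕ) : constantCoeff (expMonC y m) = 1 := by
  simp [expMonC, ← coeff_zero_eq_constantCoeff_apply]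

lemma pow_mul_eq_of_pow_mul_eq_of_pow_sub_mul_eq {R : Type*} [CommRing R] [IsDomain R]
    {A B D E F G : R} {α γ : ℕ} (hγ : γ ≤ α) (hne : A ^ α * E ≠ 0)
    (hα : A ^ α * E = B ^ α * (D * F)) (hαγ : A ^ (α - γ) * E = B ^ (α - γ) * (D * G)) :
    A ^ γ * G = B ^ γ * F := by
  have hsplit : B ^ α * (D * F) = (B ^ (α - γ) * D) * (B ^ γ * F) := by
    rw [← pow_sub_mul_pow B hγ]; ring
  have hB : B ^ (α - γ) * D ≠ 0 := left_ne_zero_of_mul (by rwa [hα, hsplit] at hne)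
  refine mul_left_cancel₀ hB ?_
  calc (B ^ (α - γ) * D) * (A ^ γ * G) = A ^ γ * (B ^ (α - γ) * (D * G)) := by ring
    _ = A ^ α * E := by rw [← hαγ, ← pow_sub_mul_pow A hγ]; ring
    _ = (B ^ (α - γ) * D) * (B ^ γ * F) := by rw [hα, hsplit]

lemma PowerSeries.coeff_C_mul_X_pow_pow_mul {R : Type*} [CommSemiring R] (w : R) {k γ n : ℕ}
    (hn : k * γ ≤ n) (f : R⟦X⟧) :
    coeff n ((C w * X ^ k) ^ γ * f) = w ^ γ * coeff (n - k * γ) f := by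
  rw [mul_pow, ← map_pow, ← pow_mul, mul_assoc, coeff_C_mul, coeff_X_pow_mul', if_pos hn]

lemma PowerSeries.coeff_mk_div_factorial_mul {K : Type*} [Field K] [CharZero K]
    (f g : ℕ → K) (n : ℕ) :
    coeff n (mk (fun i => f i / i.factorial) * mk (fun i => g i / i.factorial)) =
      (∑ l ∈ Finset.range (n + 1), (n.choose l : K) * f l * g (n - l)) / n.factorial := by
  rw [coeff_mul, Finset.Nat.sum_antidiagonal_eq_sum_range_succ_mk, Finset.sum_div]
  refine Finset.sum_congr rfl fun l hl => ?_
  have hln : l ≤ n := Nat.lt_succ_iff.mp (Finset.mem_range.mp hl)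
  simp only [coeff_mk]
  rw [Nat.cast_choose K hln]
  field_simp
  rw [mul_div_mul_right _ _ (Nat.cast_ne_zero.2 n.factorial_ne_zero)]

theorem apostol_tegh_implicit_formula_general
    (a b : ℝ) (ha : 0 < a) (β : ℂ)
    (x y z : ℝ) (k α γ m r : ℕ) (hγ : γ ≤ α)
    (P Pg St : ℕ → ℂ)
    (hP : (PowerSeries.C (R := ℂ) ((((2 : ℝ) ^ ((1 : ℝ) - (k : ℝ)) : ℝ) : ℂ)) *
          PowerSeries.X ^ k) ^ α * (expC (x : ℂ) * expMonC (y : ℂ) m) =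
        (PowerSeries.C (R := ℂ) (β ^ (b : ℂ)) * expC 1 - PowerSeries.C (R := ℂ) ((a ^ b : ℝ) : ℂ)) ^ α *
          ((1 - PowerSeries.C (R := ℂ) (z : ℂ) * PowerSeries.X ^ r) *
            PowerSeries.mk (fun n => P n / n.factorial)))
    (hPg : (PowerSeries.C (R := ℂ) ((((2 : ℝ) ^ ((1 : ℝ) - (k : ℝ)) : ℝ) : ℂ)) *
          PowerSeries.X ^ k) ^ (α - γ) * (expC (x : ℂ) * expMonC (y : ℂ) m) =
        (PowerSeries.C (R := ℂ) (β ^ (b : ℂ)) * expC 1 -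
            PowerSeries.C (R := ℂ) ((a ^ b : ℝ) : ℂ)) ^ (α - γ) *
          ((1 - PowerSeries.C (R := ℂ) (z : ℂ) * PowerSeries.X ^ r) *
            PowerSeries.mk (fun n => Pg n / n.factorial)))
    (hSt : (PowerSeries.C (R := ℂ) ((β / (a : ℂ)) ^ (b : ℂ)) * expC 1 - 1) ^ γ =
        PowerSeries.C (R := ℂ) (γ.factorial : ℂ) * PowerSeries.mk (fun n => St n / n.factorial))
    (n : ℕ) (hn : k * γ ≤ n) :
    Pg (n - k * γ) =
      (((n - k * γ).factorial : ℂ) * (γ.factorial : ℂ) / (n.factorial : ℂ)) *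
        (((a ^ b : ℝ) : ℂ) / (((2 : ℝ) ^ ((1 : ℝ) - (k : ℝ)) : ℝ) : ℂ)) ^ γ *
        ∑ l ∈ Finset.range (n + 1), (n.choose l : ℂ) * P (n - l) * St l := by
  set w : ℂ := (((2 : ℝ) ^ ((1 : ℝ) - (k : ℝ)) : ℝ) : ℂ)
  set ab : ℂ := ((a ^ b : ℝ) : ℂ)
  have hw : w ≠ 0 := Complex.ofReal_ne_zero.mpr (Real.rpow_pos_of_pos two_pos _).ne'
  have hne : (C w * X ^ k) ^ α * (expC (x : ℂ) * expMonC (y : ℂ) m) ≠ 0 :=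
    have hA : C w * X ^ k ≠ 0 :=
      mul_ne_zero ((map_ne_zero_iff _ C_injective).mpr hw) (pow_ne_zero _ X_ne_zero)
    mul_ne_zero (pow_ne_zero _ hA) fun h => by simpa using congrArg constantCoeff h
  have hB : C (β ^ (b : ℂ)) * expC 1 - C ab =
      C ab * (C ((β / (a : ℂ)) ^ (b : ℂ)) * expC 1 - 1) := by
    rw [mul_sub, mul_one, ← mul_assoc, ← map_mul, Complex.ofReal_rpow_mul_div_cpow ha]
  have hgen := pow_mul_eq_of_pow_mul_eq_of_pow_sub_mul_eq hγ hne hP hPg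
  rw [hB, mul_pow (C ab), hSt, ← map_pow, ← mul_assoc, ← map_mul, mul_assoc] at hgen
  have hc := congrArg (coeff n) hgen
  rw [coeff_C_mul_X_pow_pow_mul _ hn, coeff_C_mul, coeff_mk, coeff_mk_div_factorial_mul] at hc
  simp only [mul_right_comm _ (St _)] at hc
  have hnk : ((n - k * γ).factorial : ℂ) ≠ 0 := Nat.cast_ne_zero.mpr (Nat.factorial_ne_zero _)
  calc Pg (n - k * γ)
      = (n - k * γ).factorial / w ^ γ * (w ^ γ * (Pg (n - k * γ) / (n - k * γ).factorial)) := by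
        field_simp
    _ = _ := by rw [hc]; ring

/-- Implicit formula relating the unified Apostol type-truncated
exponential-Gould-Hopper polynomials of orders `α` and `α - γ` via the λ-Stirling
numbers of the second kind `St l = S(l,γ;(β/a)^b)`.  Generating functions are
stated with denominators cleared. -/
theorem apostol_tegh_implicit_formula
    (a b : ℝ) (ha : 0 < a) (hb : 0 < b) (β : ℂ) (hβ : β ^ (b : ℂ) ≠ ((a ^ b : ℝ) : ℂ))
    (x y z : ℝ) (k α γ m r : ℕ) (hγ : γ ≤ α)
    (P Pg St : ℕ → ℂ)
    (hP : (PowerSeries.C (R := ℂ) ((((2 : ℝ) ^ ((1 : ℝ) - (k : ℝ)) : ℝ) : ℂ)) *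
          PowerSeries.X ^ k) ^ α * (expC (x : ℂ) * expMonC (y : ℂ) m) =
        (PowerSeries.C (R := ℂ) (β ^ (b : ℂ)) * expC 1 - PowerSeries.C (R := ℂ) ((a ^ b : ℝ) : ℂ)) ^ α *
          ((1 - PowerSeries.C (R := ℂ) (z : ℂ) * PowerSeries.X ^ r) *
            PowerSeries.mk (fun n => P n / n.factorial)))
    (hPg : (PowerSeries.C (R := ℂ) ((((2 : ℝ) ^ ((1 : ℝ) - (k : ℝ)) : ℝ) : ℂ)) *
          PowerSeries.X ^ k) ^ (α - γ) * (expC (x : ℂ) * expMonC (y : ℂ) m) =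
        (PowerSeries.C (R := ℂ) (β ^ (b : ℂ)) * expC 1 -
            PowerSeries.C (R := ℂ) ((a ^ b : ℝ) : ℂ)) ^ (α - γ) *
          ((1 - PowerSeries.C (R := ℂ) (z : ℂ) * PowerSeries.X ^ r) *
            PowerSeries.mk (fun n => Pg n / n.factorial)))
    (hSt : (PowerSeries.C (R := ℂ) ((β / (a : ℂ)) ^ (b : ℂ)) * expC 1 - 1) ^ γ =
        PowerSeries.C (R := ℂ) (γ.factorial : ℂ) * PowerSeries.mk (fun n => St n / n.factorial))
    (n : ℕ) (hn : k * γ ≤ n) :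
    Pg (n - k * γ) =
      (((n - k * γ).factorial : ℂ) * (γ.factorial : ℂ) / (n.factorial : ℂ)) *
        (((a ^ b : ℝ) : ℂ) / (((2 : ℝ) ^ ((1 : ℝ) - (k : ℝ)) : ℝ) : ℂ)) ^ γ *
        ∑ l ∈ Finset.range (n + 1), (n.choose l : ℂ) * P (n - l) * St l :=
  apostol_tegh_implicit_formula_general a b ha β x y z k α γ m r hγ P Pg St hP hPg hSt n hn
end
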